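/- arXiv:2504.06693 — 8 statements merged into one kernel-verified Lean document; each statement's English description precedes it below -/
import Mathlib

section
/- Let X be a Riesz space (a real vector space with a lattice order compatible with the linear structure) and let E be a linear subspace of X. Then the following are equivalent: (1) E fails phase retrieval, i.e., there exist f, g ∈ E with |f| = |g| but f ≠ g and f ≠ −g; (2) there exist nonzero f, g ∈ E with |f| ⊓ |g| = 0. -/
/-!
The Birkhoff identities `|a + b| ⊔ |a - b| = |a| + |b|` and `|a + b| ⊓ |a - b| = ||a| - |b||`,
valid in every lattice-ordered group, exchange the two conditions under the substitution
`(f, g) ↦ (f + g, f - g)`: `|f| = |g|` makes `f + g` and `f - g` disjoint, while for disjoint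
`f, g` the infimum and supremum above coincide, so `|f + g| = |f - g|`. Lattice-ordered groups
are torsion-free, so the new pair is again nonzero, resp. not equal up to sign.
-/

section LatticeOrderedGroup

variable {α : Type*} [Lattice α] [AddCommGroup α] [AddLeftMono α]

lemma abs_add_sup_abs_sub (a b : α) : |a + b| ⊔ |a - b| = |a| + |b| :=
  calc |a + b| ⊔ |a - b|
      = ((a + b) ⊔ (a - b)) ⊔ ((-a + b) ⊔ (-a - b)) := by
        rw [abs, abs, neg_add', neg_sub', sup_sup_sup_comm, sup_comm (-a - b), sub_neg_eq_add]
    _ = (a ⊔ -a) + (b ⊔ -b) := by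
        rw [sup_add, add_sup, add_sup, sub_eq_add_neg, sub_eq_add_neg]

lemma abs_add_self (a : α) : |a + a| = |a| + |a| := by
  rw [← abs_add_sup_abs_sub, sub_self, abs_zero, sup_eq_left.mpr (abs_nonneg _)]

lemma eq_zero_of_add_self_eq_zero {a : α} (h : a + a = 0) : a = 0 := by
  have hneg : -a = a := neg_eq_of_add_eq_zero_right h
  have ha : 0 ≤ a := by simpa only [abs, hneg, sup_idem] using abs_nonneg a
  exact le_antisymm (neg_nonneg.mp (by rwa [hneg])) ha

lemma abs_add_inf_abs_sub (a b : α) : |a + b| ⊓ |a - b| = |(|a| - |b|)| :=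
  calc |a + b| ⊓ |a - b|
      = |a + b| + |a - b| - (|a + b| ⊔ |a - b|) := eq_sub_of_add_eq (inf_add_sup _ _)
    _ = |(a + b) + (a - b)| ⊔ |(a + b) - (a - b)| - (|a| + |b|) := by
        rw [abs_add_sup_abs_sub, abs_add_sup_abs_sub]
    _ = (|a| + |a|) ⊔ (|b| + |b|) - (|a| + |b|) := by
        rw [add_add_sub_cancel, add_sub_sub_cancel, abs_add_self, abs_add_self]
    _ = (|a| - |b|) ⊔ -(|a| - |b|) := by
        rw [sup_sub]; congr 1 <;> abel
    _ = |(|a| - |b|)| := rfl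

lemma abs_add_inf_abs_sub_eq_zero_of_abs_eq {a b : α} (h : |a| = |b|) :
    |a + b| ⊓ |a - b| = 0 := by
  rw [abs_add_inf_abs_sub, h, sub_self, abs_zero]

lemma abs_add_eq_abs_sub_of_abs_inf_abs_eq_zero {a b : α} (h : |a| ⊓ |b| = 0) :
    |a + b| = |a - b| := by
  have hinf : |a + b| ⊓ |a - b| = |a| + |b| := by
    rw [abs_add_inf_abs_sub, abs_sub_comm, ← sup_sub_inf_eq_abs_sub, h, sub_zero,
      ← inf_add_sup, h, zero_add]
  exact inf_eq_sup.mp (hinf.trans (abs_add_sup_abs_sub a b).symm)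

end LatticeOrderedGroup

theorem fails_phase_retrieval_iff_disjoint_pair_general
    (X : Type*) [Lattice X] [AddCommGroup X]
    [CovariantClass X X (· + ·) (· ≤ ·)]
    [Module ℝ X]
    (E : Submodule ℝ X) :
    (∃ f ∈ E, ∃ g ∈ E, |f| = |g| ∧ f ≠ g ∧ f ≠ -g) ↔
      (∃ f ∈ E, ∃ g ∈ E, f ≠ 0 ∧ g ≠ 0 ∧ |f| ⊓ |g| = 0) := by
  constructor
  · rintro ⟨f, hf, g, hg, habs, hfg, hfng⟩
    exact ⟨f + g, E.add_mem hf hg, f - g, E.sub_mem hf hg,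
      fun h ↦ hfng (eq_neg_of_add_eq_zero_left h), sub_ne_zero.mpr hfg,
      abs_add_inf_abs_sub_eq_zero_of_abs_eq habs⟩
  · rintro ⟨f, hf, g, hg, hf0, hg0, hdisj⟩
    refine ⟨f + g, E.add_mem hf hg, f - g, E.sub_mem hf hg,
      abs_add_eq_abs_sub_of_abs_inf_abs_eq_zero hdisj, fun h ↦ hg0 ?_, fun h ↦ hf0 ?_⟩
    · refine eq_zero_of_add_self_eq_zero ?_
      calc g + g = (f + g) - (f - g) := by abel
        _ = 0 := sub_eq_zero.mpr h
    · refine eq_zero_of_add_self_eq_zero ?_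
      calc f + f = (f + g) + (f - g) := by abel
        _ = 0 := by rw [h, neg_add_cancel]

/-- In a Riesz space `X`, a linear subspace `E` fails phase retrieval (there are
`f, g ∈ E` with `|f| = |g|` but `f ≠ g` and `f ≠ -g`) if and only if
`E` contains two nonzero disjoint elements. -/
theorem fails_phase_retrieval_iff_disjoint_pair
    (X : Type*) [Lattice X] [AddCommGroup X]
    [CovariantClass X X (· + ·) (· ≤ ·)]
    [Module ℝ X] [PosSMulMono ℝ X]
    (E : Submodule ℝ X) :
    (∃ f ∈ E, ∃ g ∈ E, |f| = |g| ∧ f ≠ g ∧ f ≠ -g) ↔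
      (∃ f ∈ E, ∃ g ∈ E, f ≠ 0 ∧ g ≠ 0 ∧ |f| ⊓ |g| = 0) :=
  fails_phase_retrieval_iff_disjoint_pair_general X E
end

section
/- Let K be a compact Hausdorff topological space and let E be a linear subspace of C(K; ℝ), the space of real-valued continuous functions on K. Then the following are equivalent: (1) E fails phase retrieval, i.e., there exist f, g ∈ E with |f(t)| = |g(t)| for all t ∈ K but f ≠ g and f ≠ −g; (2) there exist nonzero f, g ∈ E with min(|f(t)|, |g(t)|) = 0 for all t ∈ K; (3) there exist nonzero f, g ∈ E with f(t)·g(t) = 0 for all t ∈ K. -/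
/-! The substitution `(f, g) ↦ (f + g, f - g)`, invertible because `2` is, turns `|f| = |g|`
into `(f + g) * (f - g) = 0` in the ring `C(K, ℝ)`, and `f ≠ ±g` into `f ∓ g ≠ 0`; the
condition on `min |f| |g|` is just another way of writing `f * g = 0`. -/

section LinearOrderedRing

variable {α : Type*} [Ring α] [LinearOrder α] [IsStrictOrderedRing α]

theorem abs_eq_abs_iff_add_mul_sub_eq_zero {a b : α} : |a| = |b| ↔ (a + b) * (a - b) = 0 := by
  rw [abs_eq_abs, mul_eq_zero, add_eq_zero_iff_eq_neg, sub_eq_zero, or_comm]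

theorem min_abs_abs_eq_zero_iff_mul_eq_zero {a b : α} : min |a| |b| = 0 ↔ a * b = 0 := by
  rw [mul_eq_zero, ← abs_eq_zero (a := a), ← abs_eq_zero (a := b)]
  grind [abs_nonneg]

end LinearOrderedRing

theorem Submodule.exists_add_mul_sub_eq_zero_iff_exists_mul_eq_zero {R A : Type*} [DivisionRing R]
    [NeZero (2 : R)] [CommRing A] [Module R A] (E : Submodule R A) :
    (∃ f ∈ E, ∃ g ∈ E, (f + g) * (f - g) = 0 ∧ f ≠ g ∧ f ≠ -g) ↔
      ∃ u ∈ E, ∃ v ∈ E, u ≠ 0 ∧ v ≠ 0 ∧ u * v = 0 := by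
  constructor
  · rintro ⟨f, hf, g, hg, hfg, hne, hne_neg⟩
    exact ⟨f + g, E.add_mem hf hg, f - g, E.sub_mem hf hg,
      fun h => hne_neg (eq_neg_of_add_eq_zero_left h), sub_ne_zero.mpr hne, hfg⟩
  · rintro ⟨u, hu, v, hv, hu0, hv0, huv⟩
    have two_smul_ne_zero {w : A} (hw : w ≠ 0) : w + w ≠ 0 := by
      rw [← two_smul R]; exact smul_ne_zero two_ne_zero hw
    refine ⟨u + v, E.add_mem hu hv, u - v, E.sub_mem hu hv, ?_, ?_, ?_⟩
    · linear_combination 4 * huv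
    · intro h; apply two_smul_ne_zero hv0; linear_combination h
    · intro h; apply two_smul_ne_zero hu0; linear_combination h

namespace ContinuousMap

variable {X : Type*} [TopologicalSpace X]

theorem forall_abs_eq_abs_iff_add_mul_sub_eq_zero {f g : C(X, ℝ)} :
    (∀ t, |f t| = |g t|) ↔ (f + g) * (f - g) = 0 := by
  simp only [ContinuousMap.ext_iff, mul_apply, add_apply, sub_apply, zero_apply,
    abs_eq_abs_iff_add_mul_sub_eq_zero]

theorem forall_min_abs_abs_eq_zero_iff_mul_eq_zero {f g : C(X, ℝ)} :
    (∀ t, min |f t| |g t| = 0) ↔ f * g = 0 := by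
  simp only [ContinuousMap.ext_iff, mul_apply, zero_apply, min_abs_abs_eq_zero_iff_mul_eq_zero]

theorem forall_mul_apply_eq_zero_iff_mul_eq_zero {f g : C(X, ℝ)} :
    (∀ t, f t * g t = 0) ↔ f * g = 0 := by
  simp only [ContinuousMap.ext_iff, mul_apply, zero_apply]

end ContinuousMap

theorem fails_phase_retrieval_tfae_continuousMap_general
    (K : Type*) [TopologicalSpace K]
    (E : Submodule ℝ C(K, ℝ)) :
    List.TFAE
      [ ∃ f ∈ E, ∃ g ∈ E, (∀ t, |f t| = |g t|) ∧ f ≠ g ∧ f ≠ -g,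
        ∃ f ∈ E, ∃ g ∈ E, f ≠ 0 ∧ g ≠ 0 ∧ ∀ t, min |f t| |g t| = 0,
        ∃ f ∈ E, ∃ g ∈ E, f ≠ 0 ∧ g ≠ 0 ∧ ∀ t, f t * g t = 0 ] := by
  simp only [ContinuousMap.forall_abs_eq_abs_iff_add_mul_sub_eq_zero,
    ContinuousMap.forall_min_abs_abs_eq_zero_iff_mul_eq_zero,
    ContinuousMap.forall_mul_apply_eq_zero_iff_mul_eq_zero]
  tfae_have 1 ↔ 3 := E.exists_add_mul_sub_eq_zero_iff_exists_mul_eq_zero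
  tfae_have 2 ↔ 3 := Iff.rfl
  tfae_finish

/-- For a linear subspace `E` of `C(K; ℝ)` (`K` compact Hausdorff), the following
are equivalent: (1) `E` fails phase retrieval; (2) `E` contains two nonzero
functions with pointwise disjoint moduli; (3) `E` contains two nonzero functions
whose pointwise product vanishes. -/
theorem fails_phase_retrieval_tfae_continuousMap
    (K : Type*) [TopologicalSpace K] [CompactSpace K] [T2Space K]
    (E : Submodule ℝ C(K, ℝ)) :
    List.TFAE
      [ ∃ f ∈ E, ∃ g ∈ E, (∀ t, |f t| = |g t|) ∧ f ≠ g ∧ f ≠ -g,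
        ∃ f ∈ E, ∃ g ∈ E, f ≠ 0 ∧ g ≠ 0 ∧ ∀ t, min |f t| |g t| = 0,
        ∃ f ∈ E, ∃ g ∈ E, f ≠ 0 ∧ g ≠ 0 ∧ ∀ t, f t * g t = 0 ] :=
  fails_phase_retrieval_tfae_continuousMap_general K E
end

section
/- Let K be a compact Hausdorff topological space and let E be a complex linear subspace of C(K; ℂ). Then the following are equivalent: (1) E fails phase retrieval, i.e., there exist f, g ∈ E with |f(t)| = |g(t)| for all t ∈ K such that f ≠ λg for every λ ∈ ℂ with |λ| = 1; (2) there exist ℂ-linearly independent f, g ∈ E with |f(t)−g(t)| = |f(t)+g(t)| for all t ∈ K; (3) there exist ℂ-linearly independent f, g ∈ E with Re(f(t)·conj(g(t))) = 0 for all t ∈ K; (4) there exist ℂ-linearly independent f, g ∈ E with |f(t)+g(t)|² = |f(t)|² + |g(t)|² for all t ∈ K. -/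
/-!
When `|f| = |g|` pointwise, `f` and `g` are linearly dependent exactly when `f = λ g` with
`|λ| = 1`, so (1) asks for independent `f, g` with `|f| = |g|`. The substitution
`(f, g) ↦ (f + g, f - g)` preserves linear independence (as `2 ≠ 0`) and turns `|f| = |g|` into
`|f - g| = |f + g|`. The remaining equivalences are the pointwise identities
`|a ± b|² = |a|² + |b|² ± 2 Re (a conj b)`.
-/

theorem LinearIndependent.pair_add_sub_iff {R M : Type*} [CommRing R] [IsDomain R]
    [AddCommGroup M] [Module R M] (h2 : (2 : R) ≠ 0) {x y : M} :
    LinearIndependent R ![x + y, x - y] ↔ LinearIndependent R ![x, y] := by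
  have h :=
    LinearIndependent.pair_add_smul_add_smul_iff (R := R) (S := R) (x := x) (y := y) 1 1 1 (-1)
  simp only [one_smul, neg_one_smul, ← sub_eq_add_neg] at h
  rw [h, and_iff_left_iff_imp]
  intro _ h'
  exact h2 (by linear_combination -h')

namespace Complex

open ComplexConjugate

theorem norm_sub_eq_norm_add_iff (a b : ℂ) :
    ‖a - b‖ = ‖a + b‖ ↔ (a * conj b).re = 0 := by
  rw [← sq_eq_sq₀ (norm_nonneg _) (norm_nonneg _), Complex.sq_norm, Complex.sq_norm, normSq_sub,
    normSq_add]
  constructor <;> intro h <;> linarith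

theorem re_mul_conj_eq_zero_iff (a b : ℂ) :
    (a * conj b).re = 0 ↔ ‖a + b‖ ^ 2 = ‖a‖ ^ 2 + ‖b‖ ^ 2 := by
  rw [Complex.sq_norm, Complex.sq_norm, Complex.sq_norm, normSq_add]
  constructor <;> intro h <;> linarith

end Complex

namespace ContinuousMap

variable {X 𝕜 : Type*} [TopologicalSpace X] [NormedField 𝕜]

theorem linearIndependent_pair_iff_of_norm_eq {f g : C(X, 𝕜)} (h : ∀ t, ‖f t‖ = ‖g t‖) :
    LinearIndependent 𝕜 ![f, g] ↔ ∀ c : 𝕜, ‖c‖ = 1 → f ≠ c • g := by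
  constructor
  · intro hli c _ hfc
    rw [LinearIndependent.pair_iff] at hli
    exact one_ne_zero (hli 1 (-c) (by simp [hfc])).1
  · intro hne
    have hg : g ≠ 0 := by
      rintro rfl
      exact hne 1 norm_one (by ext t; simpa using h t)
    obtain ⟨t, ht⟩ : ∃ t, g t ≠ 0 := by simpa [ContinuousMap.ext_iff] using hg
    rw [LinearIndependent.pair_symm_iff, LinearIndependent.pair_iff' hg]
    rintro c rfl
    refine hne c ?_ rfl
    have hct := h t
    rw [smul_apply, smul_eq_mul, norm_mul] at hct
    exact (mul_eq_right₀ (norm_ne_zero_iff.2 ht)).1 hct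

end ContinuousMap

theorem fails_complex_phase_retrieval_tfae_general
    (K : Type*) [TopologicalSpace K]
    (E : Submodule ℂ C(K, ℂ)) :
    List.TFAE
      [ ∃ f ∈ E, ∃ g ∈ E, (∀ t, ‖f t‖ = ‖g t‖) ∧
          ∀ c : ℂ, ‖c‖ = 1 → f ≠ c • g,
        ∃ f ∈ E, ∃ g ∈ E, LinearIndependent ℂ ![f, g] ∧
          ∀ t, ‖f t - g t‖ = ‖f t + g t‖,
        ∃ f ∈ E, ∃ g ∈ E, LinearIndependent ℂ ![f, g] ∧
          ∀ t, (f t * (starRingEnd ℂ) (g t)).re = 0,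
        ∃ f ∈ E, ∃ g ∈ E, LinearIndependent ℂ ![f, g] ∧
          ∀ t, ‖f t + g t‖ ^ 2 =
            ‖f t‖ ^ 2 + ‖g t‖ ^ 2 ] := by
  tfae_have 1 ↔ 2 := by
    constructor
    · rintro ⟨f, hf, g, hg, hnorm, hne⟩
      refine ⟨f + g, E.add_mem hf hg, f - g, E.sub_mem hf hg,
        (LinearIndependent.pair_add_sub_iff two_ne_zero).2
          ((ContinuousMap.linearIndependent_pair_iff_of_norm_eq hnorm).2 hne), fun t => ?_⟩
      simp only [ContinuousMap.add_apply, ContinuousMap.sub_apply, add_sub_sub_cancel,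
        add_add_sub_cancel, ← two_mul, norm_mul, hnorm t]
    · rintro ⟨u, hu, v, hv, hli, hnorm⟩
      have hnorm' : ∀ t, ‖(u + v) t‖ = ‖(u - v) t‖ := fun t => (hnorm t).symm
      exact ⟨u + v, E.add_mem hu hv, u - v, E.sub_mem hu hv, hnorm',
        (ContinuousMap.linearIndependent_pair_iff_of_norm_eq hnorm').1
          ((LinearIndependent.pair_add_sub_iff two_ne_zero).2 hli)⟩
  tfae_have 2 ↔ 3 := by simp only [Complex.norm_sub_eq_norm_add_iff]
  tfae_have 3 ↔ 4 := by simp only [Complex.re_mul_conj_eq_zero_iff]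
  tfae_finish

/-- Characterization of failure of complex phase retrieval for subspaces of
`C(K; ℂ)`, `K` compact Hausdorff. -/
theorem fails_complex_phase_retrieval_tfae
    (K : Type*) [TopologicalSpace K] [CompactSpace K] [T2Space K]
    (E : Submodule ℂ C(K, ℂ)) :
    List.TFAE
      [ ∃ f ∈ E, ∃ g ∈ E, (∀ t, ‖f t‖ = ‖g t‖) ∧
          ∀ c : ℂ, ‖c‖ = 1 → f ≠ c • g,
        ∃ f ∈ E, ∃ g ∈ E, LinearIndependent ℂ ![f, g] ∧
          ∀ t, ‖f t - g t‖ = ‖f t + g t‖,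
        ∃ f ∈ E, ∃ g ∈ E, LinearIndependent ℂ ![f, g] ∧
          ∀ t, (f t * (starRingEnd ℂ) (g t)).re = 0,
        ∃ f ∈ E, ∃ g ∈ E, LinearIndependent ℂ ![f, g] ∧
          ∀ t, ‖f t + g t‖ ^ 2 =
            ‖f t‖ ^ 2 + ‖g t‖ ^ 2 ] :=
  fails_complex_phase_retrieval_tfae_general K E
end

section
/- Let X be a real Banach lattice and let f, g ∈ X be linearly independent. Let Y = span{f, g} and suppose Y carries a real inner product ⟨·,·⟩ whose induced norm ‖y‖_H = √⟨y,y⟩ satisfies ‖y‖ ≤ ‖y‖_H ≤ K‖y‖ for all y ∈ Y, where 1 ≤ K ≤ √2. Then there exist f', g' ∈ Y such that: min(‖f−g‖, ‖f+g‖) ≤ K·min(‖f'−g'‖, ‖f'+g'‖); (‖f'‖² + ‖g'‖²)^{1/2} ≤ K·min(‖f'−g'‖, ‖f'+g'‖); and | |f'| − |g'| | ≤ | |f| − |g| | in the lattice order of X. -/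
/-!
Write `u = f - g` and `v = f + g`, and by symmetry let `v` be the one of smaller Hilbertian
norm, `‖v‖_H = c ‖u‖_H` with `0 ≤ c ≤ 1`. The pair `f' = (v + c u) / 2`, `g' = (v - c u) / 2`
has `f' + g' = v` and `f' - g' = c u`, so both have Hilbertian norm `‖v‖_H`, and by the
parallelogram law `‖f'‖_H² + ‖g'‖_H² = ‖v‖_H²`; the norm estimates follow from the
`K`-equivalence of the two norms. On the lattice side, `||a| - |b|| = |a - b| ⊓ |a + b|`
turns the claim into `|c u| ⊓ |v| ≤ |u| ⊓ |v|`.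
-/

section LatticeOrderedGroup

variable {α : Type*} [Lattice α] [AddCommGroup α] [IsOrderedAddMonoid α]

lemma sub_inf_add_le_abs_sub_abs (a b : α) : (a - b) ⊓ (a + b) ≤ |a| - |b| :=
  calc (a - b) ⊓ (a + b) = a + (-b ⊓ b) := by rw [add_inf, sub_eq_add_neg]
    _ = a - |b| := by rw [abs, sub_eq_add_neg, neg_sup, neg_neg]
    _ ≤ |a| - |b| := sub_le_sub_right (le_abs_self a) _

lemma abs_sub_inf_abs_add (a b : α) : |a - b| ⊓ |a + b| = |(|a| - |b|)| := by
  let := AddCommGroup.toDistribLattice α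
  have key (x y : α) : (x - y) ⊓ (x + y) ≤ |(|x| - |y|)| :=
    (sub_inf_add_le_abs_sub_abs x y).trans (le_abs_self _)
  refine le_antisymm ?_ (le_inf (abs_abs_sub_abs_le a b) ?_)
  · rw [abs, abs, inf_sup_right, inf_sup_left, inf_sup_left]
    refine sup_le (sup_le (key a b) ?_) (sup_le ?_ ?_)
    · convert key (-b) a using 1
      · rw [inf_comm]; congr 1 <;> abel
      · rw [abs_neg, abs_sub_comm]
    · convert key b a using 1
      · congr 1 <;> abel
      · rw [abs_sub_comm]
    · convert key (-a) b using 1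
      · rw [inf_comm]; congr 1 <;> abel
      · rw [abs_neg]
  · simpa using abs_abs_sub_abs_le a (-b)

lemma abs_smul_le_abs {𝕜 : Type*} [Ring 𝕜] [PartialOrder 𝕜] [IsOrderedRing 𝕜] [Module 𝕜 α]
    [PosSMulMono 𝕜 α] {c : 𝕜} (hc0 : 0 ≤ c) (hc1 : c ≤ 1) (u : α) :
    |c • u| ≤ |u| := by
  have hcu : c • |u| ≤ |u| := by
    simpa using smul_le_smul_of_nonneg_right hc1 (abs_nonneg u)
  rw [abs_le']
  constructor
  · exact (smul_le_smul_of_nonneg_left (le_abs_self u) hc0).trans hcu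
  · rw [← smul_neg]
    exact (smul_le_smul_of_nonneg_left (neg_le_abs u) hc0).trans hcu

end LatticeOrderedGroup

lemma LinearMap.BilinForm.apply_add_add_apply_sub {R M : Type*} [CommRing R] [AddCommGroup M]
    [Module R M] (B : LinearMap.BilinForm R M) (x y : M) :
    B (x + y) (x + y) + B (x - y) (x - y) = 2 * (B x x + B y y) := by
  simp only [map_add, map_sub, LinearMap.add_apply, LinearMap.sub_apply]
  ring

lemma exists_mem_Icc_sq_mul_eq {a b : ℝ} (hb : 0 ≤ b) (hba : b ≤ a) :
    ∃ c ∈ Set.Icc (0 : ℝ) 1, c ^ 2 * a = b := by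
  refine ⟨√(b / a), ⟨Real.sqrt_nonneg _, ?_⟩, ?_⟩
  · exact Real.sqrt_le_one.mpr (div_le_one_of_le₀ hba (hb.trans hba))
  · rw [Real.sq_sqrt (div_nonneg hb (hb.trans hba))]
    rcases (hb.trans hba).eq_or_lt with ha | ha
    · subst ha
      rw [div_zero, zero_mul]
      exact (hba.antisymm hb).symm
    · exact div_mul_cancel₀ b ha.ne'

section Reduction

variable {X : Type*} [NormedAddCommGroup X] [Lattice X] [IsOrderedAddMonoid X] [NormedSpace ℝ X]
  [PosSMulMono ℝ X] {Y : Submodule ℝ X} {B : LinearMap.BilinForm ℝ Y} {K : ℝ}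

lemma exists_almost_orthogonal_pair_of_le (hpos : ∀ y, 0 ≤ B y y)
    (hlow : ∀ y : Y, ‖(y : X)‖ ≤ √(B y y)) (hhigh : ∀ y : Y, √(B y y) ≤ K * ‖(y : X)‖)
    (u v : Y) (huv : B v v ≤ B u u) :
    ∃ f' ∈ Y, ∃ g' ∈ Y,
      ‖(v : X)‖ ≤ K * min ‖f' - g'‖ ‖f' + g'‖ ∧
      √(‖f'‖ ^ 2 + ‖g'‖ ^ 2) ≤ K * min ‖f' - g'‖ ‖f' + g'‖ ∧
      |(|f'| - |g'|)| ≤ |(u : X)| ⊓ |(v : X)| := by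
  obtain ⟨c, ⟨hc0, hc1⟩, hc⟩ := exists_mem_Icc_sq_mul_eq (hpos v) huv
  set x : Y := (2⁻¹ : ℝ) • (v + c • u)
  set y : Y := (2⁻¹ : ℝ) • (v - c • u)
  have hsub : x - y = c • u := by module
  have hadd : x + y = v := by module
  have hsubX : (x : X) - y = c • (u : X) := by rw [← Submodule.coe_sub, hsub, Submodule.coe_smul]
  have haddX : (x : X) + y = v := by rw [← Submodule.coe_add, hadd]
  have hBsub : B (x - y) (x - y) = B v v := by
    rw [hsub, ← hc]
    simp only [map_smul, LinearMap.smul_apply, smul_eq_mul]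
    ring
  have hBsum : B x x + B y y = B v v := by
    have := B.apply_add_add_apply_sub x y
    rw [hadd, hBsub] at this
    linarith
  have hH : √(B v v) ≤ K * min ‖(x : X) - y‖ ‖(x : X) + y‖ := by
    have h₁ : √(B v v) ≤ K * ‖(x : X) - y‖ := by
      rw [← hBsub, ← Submodule.coe_sub]; exact hhigh (x - y)
    have h₂ : √(B v v) ≤ K * ‖(x : X) + y‖ := haddX ▸ hhigh v
    -- `min` is one of its arguments, so no sign condition on `K` is needed
    rcases min_choice ‖(x : X) - y‖ ‖(x : X) + y‖ with h | h <;> rw [h] <;> assumption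
  have hsq (z : Y) : ‖(z : X)‖ ^ 2 ≤ B z z := (Real.le_sqrt (norm_nonneg _) (hpos z)).mp (hlow z)
  refine ⟨x, x.2, y, y.2, (hlow v).trans hH, ?_, ?_⟩
  · calc √(‖(x : X)‖ ^ 2 + ‖(y : X)‖ ^ 2) ≤ √(B x x + B y y) :=
          Real.sqrt_le_sqrt (add_le_add (hsq x) (hsq y))
      _ ≤ K * min ‖(x : X) - y‖ ‖(x : X) + y‖ := hBsum ▸ hH
  · calc |(|(x : X)| - |(y : X)|)| = |c • (u : X)| ⊓ |(v : X)| := by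
          rw [← abs_sub_inf_abs_add, hsubX, haddX]
      _ ≤ |(u : X)| ⊓ |(v : X)| := inf_le_inf_right _ (abs_smul_le_abs hc0 hc1 _)

lemma exists_almost_orthogonal_pair (hpos : ∀ y, 0 ≤ B y y)
    (hlow : ∀ y : Y, ‖(y : X)‖ ≤ √(B y y)) (hhigh : ∀ y : Y, √(B y y) ≤ K * ‖(y : X)‖)
    (u v : Y) :
    ∃ f' ∈ Y, ∃ g' ∈ Y,
      min ‖(u : X)‖ ‖(v : X)‖ ≤ K * min ‖f' - g'‖ ‖f' + g'‖ ∧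
      √(‖f'‖ ^ 2 + ‖g'‖ ^ 2) ≤ K * min ‖f' - g'‖ ‖f' + g'‖ ∧
      |(|f'| - |g'|)| ≤ |(u : X)| ⊓ |(v : X)| := by
  rcases le_total (B v v) (B u u) with h | h
  · obtain ⟨f', hf', g', hg', h₁, h₂, h₃⟩ :=
      exists_almost_orthogonal_pair_of_le hpos hlow hhigh u v h
    exact ⟨f', hf', g', hg', (min_le_right _ _).trans h₁, h₂, h₃⟩
  · obtain ⟨f', hf', g', hg', h₁, h₂, h₃⟩ :=
      exists_almost_orthogonal_pair_of_le hpos hlow hhigh v u h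
    exact ⟨f', hf', g', hg', (min_le_left _ _).trans h₁, h₂, inf_comm |(v : X)| _ ▸ h₃⟩

end Reduction

theorem orthogonal_reduction_general
    (X : Type*) [NormedAddCommGroup X] [Lattice X] [IsOrderedAddMonoid X]
    [NormedSpace ℝ X] [PosSMulStrictMono ℝ X]
    (f g : X) (K : ℝ)
    (B : ↥(Submodule.span ℝ ({f, g} : Set X)) →ₗ[ℝ]
          ↥(Submodule.span ℝ ({f, g} : Set X)) →ₗ[ℝ] ℝ)
    (hpos : ∀ y, 0 ≤ B y y)
    (hlow : ∀ y : ↥(Submodule.span ℝ ({f, g} : Set X)), ‖(y : X)‖ ≤ Real.sqrt (B y y))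
    (hhigh : ∀ y : ↥(Submodule.span ℝ ({f, g} : Set X)), Real.sqrt (B y y) ≤ K * ‖(y : X)‖) :
    ∃ f' ∈ Submodule.span ℝ ({f, g} : Set X), ∃ g' ∈ Submodule.span ℝ ({f, g} : Set X),
      min ‖f - g‖ ‖f + g‖ ≤ K * min ‖f' - g'‖ ‖f' + g'‖ ∧
      Real.sqrt (‖f'‖ ^ 2 + ‖g'‖ ^ 2) ≤ K * min ‖f' - g'‖ ‖f' + g'‖ ∧
      |(|f'| - |g'|)| ≤ |(|f| - |g|)| := by
  let F : Submodule.span ℝ ({f, g} : Set X) := ⟨f, Submodule.subset_span (by simp)⟩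
  let G : Submodule.span ℝ ({f, g} : Set X) := ⟨g, Submodule.subset_span (by simp)⟩
  obtain ⟨f', hf', g', hg', h₁, h₂, h₃⟩ :=
    exists_almost_orthogonal_pair hpos hlow hhigh (F - G) (F + G)
  exact ⟨f', hf', g', hg', h₁, h₂, h₃.trans_eq (abs_sub_inf_abs_add f g)⟩

/-- Orthogonal reduction (Freeman–Oikhberg–Pineau–Taylor, real case): if `f, g` are
linearly independent elements of a real Banach lattice `X` and `Y = span{f, g}`
carries an inner product `B` whose induced Hilbertian norm is `K`-equivalent to the
ambient norm with `1 ≤ K ≤ √2`, then there are `f', g' ∈ Y` witnessing stable phase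
retrieval on almost orthogonal vectors. -/
theorem orthogonal_reduction
    (X : Type*) [NormedAddCommGroup X] [Lattice X] [HasSolidNorm X] [IsOrderedAddMonoid X]
    [CompleteSpace X]
    [NormedSpace ℝ X] [PosSMulStrictMono ℝ X] [PosSMulReflectLT ℝ X]
    (f g : X) (hind : LinearIndependent ℝ ![f, g]) (K : ℝ)
    (hK1 : 1 ≤ K) (hK2 : K ≤ Real.sqrt 2)
    (B : ↥(Submodule.span ℝ ({f, g} : Set X)) →ₗ[ℝ]
          ↥(Submodule.span ℝ ({f, g} : Set X)) →ₗ[ℝ] ℝ)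
    (hsym : ∀ x y, B x y = B y x)
    (hpos : ∀ y, 0 ≤ B y y)
    (hlow : ∀ y : ↥(Submodule.span ℝ ({f, g} : Set X)), ‖(y : X)‖ ≤ Real.sqrt (B y y))
    (hhigh : ∀ y : ↥(Submodule.span ℝ ({f, g} : Set X)), Real.sqrt (B y y) ≤ K * ‖(y : X)‖) :
    ∃ f' ∈ Submodule.span ℝ ({f, g} : Set X), ∃ g' ∈ Submodule.span ℝ ({f, g} : Set X),
      min ‖f - g‖ ‖f + g‖ ≤ K * min ‖f' - g'‖ ‖f' + g'‖ ∧
      Real.sqrt (‖f'‖ ^ 2 + ‖g'‖ ^ 2) ≤ K * min ‖f' - g'‖ ‖f' + g'‖ ∧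
      |(|f'| - |g'|)| ≤ |(|f| - |g|)| :=
  orthogonal_reduction_general X f g K B hpos hlow hhigh
end

section
/- Let K be a compact Hausdorff topological space, E a complex linear subspace of C(K; ℂ), and ε > 0. If there exist u, v ∈ E with ‖u‖∞ = ‖v‖∞ = 1 and ‖ t ↦ min(|u(t)|, |v(t)|) ‖∞ < ε, then E fails stable phase retrieval with constant 1/(√2·ε): there exist f, g ∈ E with inf{‖f − λg‖∞ : λ ∈ ℂ, |λ| = 1} > (1/(√2·ε))·‖ t ↦ |f(t)| − |g(t)| ‖∞. -/
/-!
Choose points `t₁, t₂` where `|u|` and `|v|` attain their maximum `1`, and rotate `v` by a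
unimodular `γ` making `u t₁ · conj (γ v t₁) + u t₂ · conj (γ v t₂)` real; put `f = u + γ v` and
`g = u - γ v`. Pointwise `||f| - |g|| ≤ 2 min (|u|, |v|) < 2ε`. For `|λ| = 1` we have
`f - λ g = (1 - λ) u + (1 + λ) γ v`, and `(1 - λ) conj (1 + λ) = conj λ - λ` is purely imaginary,
so the cross terms at `t₁` and `t₂` cancel and
`|(f - λ g) t₁|² + |(f - λ g) t₂|² ≥ |1 - λ|² + |1 + λ|² = 4`; hence `‖f - λ g‖ ≥ √2`.
-/

/-- The continuous function `t ↦ min (|u t|, |v t|)` for `u, v ∈ C(K; ℂ)`. -/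
noncomputable def minAbsCM {K : Type*} [TopologicalSpace K] (u v : C(K, ℂ)) : C(K, ℝ) :=
  ⟨fun t => min ‖u t‖ ‖v t‖,
    (continuous_norm.comp u.continuous).min (continuous_norm.comp v.continuous)⟩

/-- The continuous function `t ↦ |f t| - |g t|` for `f, g ∈ C(K; ℂ)`. -/
noncomputable def absDiffCM {K : Type*} [TopologicalSpace K] (f g : C(K, ℂ)) : C(K, ℝ) :=
  ⟨fun t => ‖f t‖ - ‖g t‖,
    (continuous_norm.comp f.continuous).sub (continuous_norm.comp g.continuous)⟩

open Complex ComplexConjugate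

theorem abs_norm_add_sub_norm_sub_le_two_mul_min {E : Type*} [SeminormedAddCommGroup E]
    (a b : E) : |‖a + b‖ - ‖a - b‖| ≤ 2 * min ‖a‖ ‖b‖ := by
  rw [mul_min_of_nonneg _ _ zero_le_two, le_min_iff, two_mul, two_mul]
  constructor
  · calc |‖a + b‖ - ‖a - b‖| = |‖a + b‖ - ‖b - a‖| := by rw [norm_sub_rev]
      _ ≤ ‖(a + b) - (b - a)‖ := abs_norm_sub_norm_le _ _
      _ = ‖a + a‖ := by abel_nf
      _ ≤ ‖a‖ + ‖a‖ := norm_add_le a a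
  · calc |‖a + b‖ - ‖a - b‖| ≤ ‖(a + b) - (a - b)‖ := abs_norm_sub_norm_le _ _
      _ = ‖b + b‖ := by abel_nf
      _ ≤ ‖b‖ + ‖b‖ := norm_add_le b b

theorem normSq_one_sub_mul_add_one_add_mul {l : ℂ} (hl : ‖l‖ = 1) (x y : ℂ) :
    normSq ((1 - l) * x + (1 + l) * y) =
      normSq (1 - l) * normSq x + normSq (1 + l) * normSq y + 4 * l.im * (x * conj y).im := by
  have hl' : l.re * l.re + l.im * l.im = 1 := by
    rw [← normSq_apply, normSq_eq_norm_sq, hl, one_pow]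
  simp only [normSq_apply, mul_re, mul_im, add_re, add_im, sub_re, sub_im, one_re, one_im,
    conj_re, conj_im]
  linear_combination (-2 * (x.re * y.re + x.im * y.im)) * hl'

theorem four_le_sq_norm_add_sq_norm {l p q r s : ℂ} (hl : ‖l‖ = 1) (hp : ‖p‖ = 1) (hs : ‖s‖ = 1)
    (him : (p * conj q + r * conj s).im = 0) :
    4 ≤ ‖(1 - l) * p + (1 + l) * q‖ ^ 2 + ‖(1 - l) * r + (1 + l) * s‖ ^ 2 := by
  have hparallelogram : normSq (1 - l) + normSq (1 + l) = 4 := by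
    rw [normSq_add, normSq_sub, normSq_one, normSq_eq_norm_sq l, hl]
    norm_num
  have hcross : l.im * (p * conj q).im + l.im * (r * conj s).im = 0 := by
    rw [← mul_add, ← add_im, him, mul_zero]
  rw [Complex.sq_norm, Complex.sq_norm, normSq_one_sub_mul_add_one_add_mul hl,
    normSq_one_sub_mul_add_one_add_mul hl, normSq_eq_norm_sq p, normSq_eq_norm_sq s, hp, hs]
  nlinarith [mul_nonneg (normSq_nonneg (1 + l)) (normSq_nonneg q),
    mul_nonneg (normSq_nonneg (1 - l)) (normSq_nonneg r)]

theorem exists_norm_eq_one_im_conj_mul_eq_zero (w : ℂ) :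
    ∃ γ : ℂ, ‖γ‖ = 1 ∧ (conj γ * w).im = 0 := by
  refine ⟨exp (arg w * I), norm_exp_ofReal_mul_I _, ?_⟩
  nth_rewrite 2 [← norm_mul_exp_arg_mul_I w]
  rw [mul_left_comm, conj_mul', norm_exp_ofReal_mul_I]
  simp

section ContinuousFunctions

variable {K : Type*} [TopologicalSpace K]

theorem minAbsCM_smul_right (u v : C(K, ℂ)) {γ : ℂ} (hγ : ‖γ‖ = 1) :
    minAbsCM u (γ • v) = minAbsCM u v := by
  ext t
  simp [minAbsCM, hγ]

variable [CompactSpace K]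

theorem ContinuousMap.exists_norm_apply_eq_norm [Nonempty K] {E : Type*} [NormedAddCommGroup E]
    (f : C(K, E)) : ∃ t, ‖f t‖ = ‖f‖ := by
  obtain ⟨t, ht⟩ := (map_continuous f).norm.exists_forall_ge (by simp)
  exact ⟨t, le_antisymm (f.norm_coe_le_norm t) (f.norm_le_of_nonempty.2 ht)⟩

theorem norm_absDiffCM_add_sub_le (u w : C(K, ℂ)) :
    ‖absDiffCM (u + w) (u - w)‖ ≤ 2 * ‖minAbsCM u w‖ := by
  refine (ContinuousMap.norm_le _ (by positivity)).2 fun t => ?_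
  calc ‖absDiffCM (u + w) (u - w) t‖ = |‖u t + w t‖ - ‖u t - w t‖| := rfl
    _ ≤ 2 * min ‖u t‖ ‖w t‖ := abs_norm_add_sub_norm_sub_le_two_mul_min _ _
    _ = 2 * ‖minAbsCM u w t‖ := by
      show _ = 2 * ‖min ‖u t‖ ‖w t‖‖
      rw [Real.norm_of_nonneg (le_min (norm_nonneg _) (norm_nonneg _))]
    _ ≤ 2 * ‖minAbsCM u w‖ := by gcongr; exact ContinuousMap.norm_coe_le_norm _ t

theorem ContinuousMap.sqrt_two_le_norm_add_sub_smul_sub {u w : C(K, ℂ)} {t₁ t₂ : K}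
    (h₁ : ‖u t₁‖ = 1) (h₂ : ‖w t₂‖ = 1)
    (him : (u t₁ * conj (w t₁) + u t₂ * conj (w t₂)).im = 0) {l : ℂ} (hl : ‖l‖ = 1) :
    √2 ≤ ‖u + w - l • (u - w)‖ := by
  set F := u + w - l • (u - w)
  have hF : ∀ t, F t = (1 - l) * u t + (1 + l) * w t := fun t => by
    simp only [F, ContinuousMap.sub_apply, ContinuousMap.add_apply, ContinuousMap.smul_apply,
      smul_eq_mul]; ring
  have h4 := four_le_sq_norm_add_sq_norm hl h₁ h₂ him
  rw [← hF, ← hF] at h4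
  rw [Real.sqrt_le_left (norm_nonneg F)]
  have hF₁ := pow_le_pow_left₀ (norm_nonneg _) (F.norm_coe_le_norm t₁) 2
  have hF₂ := pow_le_pow_left₀ (norm_nonneg _) (F.norm_coe_le_norm t₂) 2
  linarith

end ContinuousFunctions

theorem almost_disjoint_pair_fails_complex_SPR_general
    (K : Type*) [TopologicalSpace K] [CompactSpace K]
    (E : Submodule ℂ C(K, ℂ)) (ε : ℝ) (hε : 0 < ε)
    (u : C(K, ℂ)) (hu : u ∈ E) (v : C(K, ℂ)) (hv : v ∈ E)
    (hun : ‖u‖ = 1) (hvn : ‖v‖ = 1) (hmin : ‖minAbsCM u v‖ < ε) :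
    ∃ f ∈ E, ∃ g ∈ E,
      (1 / (Real.sqrt 2 * ε)) * ‖absDiffCM f g‖ <
        ⨅ c : Metric.sphere (0 : ℂ) 1, ‖f - (c : ℂ) • g‖ := by
  have : Nonempty K := by
    by_contra h
    rw [not_nonempty_iff] at h
    simp [Subsingleton.elim u 0] at hun
  obtain ⟨t₁, ht₁⟩ := u.exists_norm_apply_eq_norm
  obtain ⟨t₂, ht₂⟩ := v.exists_norm_apply_eq_norm
  obtain ⟨γ, hγ, him⟩ :=
    exists_norm_eq_one_im_conj_mul_eq_zero (u t₁ * conj (v t₁) + u t₂ * conj (v t₂))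
  have hγv : γ • v ∈ E := E.smul_mem γ hv
  refine ⟨u + γ • v, E.add_mem hu hγv, u - γ • v, E.sub_mem hu hγv, ?_⟩
  have hdiff : ‖absDiffCM (u + γ • v) (u - γ • v)‖ < 2 * ε := by
    calc _ ≤ 2 * ‖minAbsCM u (γ • v)‖ := norm_absDiffCM_add_sub_le u _
      _ = 2 * ‖minAbsCM u v‖ := by rw [minAbsCM_smul_right u v hγ]
      _ < 2 * ε := by linarith
  have hinf : √2 ≤ ⨅ c : Metric.sphere (0 : ℂ) 1, ‖u + γ • v - (c : ℂ) • (u - γ • v)‖ := by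
    refine le_ciInf fun c =>
      ContinuousMap.sqrt_two_le_norm_add_sub_smul_sub (t₁ := t₁) (t₂ := t₂) (ht₁.trans hun)
        (by simp [hγ, ht₂, hvn]) ?_ (mem_sphere_zero_iff_norm.1 c.2)
    convert him using 2
    simp only [ContinuousMap.smul_apply, smul_eq_mul, map_mul]
    ring
  calc 1 / (√2 * ε) * ‖absDiffCM (u + γ • v) (u - γ • v)‖ < 1 / (√2 * ε) * (2 * ε) := by
        gcongr
    _ = √2 := by field_simp; norm_num
    _ ≤ _ := hinf

/-- If a complex subspace `E` of `C(K; ℂ)` contains a normalized `ε`-almost disjoint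
pair, then `E` fails stable phase retrieval with constant `1/(√2 ε)`. -/
theorem almost_disjoint_pair_fails_complex_SPR
    (K : Type*) [TopologicalSpace K] [CompactSpace K] [T2Space K]
    (E : Submodule ℂ C(K, ℂ)) (ε : ℝ) (hε : 0 < ε)
    (u : C(K, ℂ)) (hu : u ∈ E) (v : C(K, ℂ)) (hv : v ∈ E)
    (hun : ‖u‖ = 1) (hvn : ‖v‖ = 1) (hmin : ‖minAbsCM u v‖ < ε) :
    ∃ f ∈ E, ∃ g ∈ E,
      (1 / (Real.sqrt 2 * ε)) * ‖absDiffCM f g‖ <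
        ⨅ c : Metric.sphere (0 : ℂ) 1, ‖f - (c : ℂ) • g‖ :=
  almost_disjoint_pair_fails_complex_SPR_general K E ε hε u hu v hv hun hvn hmin
end

section
/- Let X be a normed vector space over ℂ, let u, v ∈ X with ‖u‖ = ‖v‖ = 1, and let m > 0 be such that ‖u − λv‖ ≥ m for every λ ∈ ℂ with |λ| = 1. Set δ = (1 + (1 + m/2)²)^{−1/2}. Then for all α, β ∈ ℂ with |α|² + |β|² = 1, one has ‖αu + βv‖ ≥ δm/2. -/
/-!
Write `z = r c` with `r = ‖z‖ ≤ 1` and `|c| = 1`. Then `‖u - z v‖` is at least `‖u‖ - r‖v‖` by the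
reverse triangle inequality, and at least `m - (1 - r)‖v‖` because `z v` lies within `(1 - r)‖v‖`
of `c v`; the two bounds add up to `m`, so one of them is `≥ m/2`. Factoring out the larger of
`α, β` (which has modulus `≥ 1/√2 ≥ δ`) reduces the theorem to this case.
-/

open Complex

section

variable {X : Type*} [NormedAddCommGroup X] [NormedSpace ℂ X]

def ProjSeparated (m : ℝ) (u v : X) : Prop :=
  ∀ c : ℂ, ‖c‖ = 1 → m ≤ ‖u - c • v‖

theorem ProjSeparated.symm {m : ℝ} {u v : X} (h : ProjSeparated m u v) :
    ProjSeparated m v u := by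
  intro c hc
  have hc0 : c ≠ 0 := norm_ne_zero_iff.mp (hc ▸ one_ne_zero)
  calc m ≤ ‖u - c⁻¹ • v‖ := h c⁻¹ (by rw [norm_inv, hc, inv_one])
    _ = ‖c • (u - c⁻¹ • v)‖ := by rw [norm_smul, hc, one_mul]
    _ = ‖v - c • u‖ := by rw [smul_sub, smul_inv_smul₀ hc0, norm_sub_rev]

theorem ProjSeparated.half_le_norm_sub_smul {m : ℝ} {u v : X} (h : ProjSeparated m u v)
    (hvu : ‖v‖ ≤ ‖u‖) {z : ℂ} (hz : ‖z‖ ≤ 1) : m / 2 ≤ ‖u - z • v‖ := by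
  set c : ℂ := exp (z.arg * I)
  have hc : ‖c‖ = 1 := norm_exp_ofReal_mul_I _
  have hzc : z - c = ((‖z‖ - 1 : ℝ) : ℂ) * c := by
    conv_lhs => rw [← norm_mul_exp_arg_mul_I z]
    push_cast; ring
  have hnear : ‖u - c • v‖ ≤ ‖u - z • v‖ + (1 - ‖z‖) * ‖v‖ := by
    calc ‖u - c • v‖ = ‖(u - z • v) + (z - c) • v‖ := by rw [sub_smul]; abel_nf
      _ ≤ ‖u - z • v‖ + ‖(z - c) • v‖ := norm_add_le _ _
      _ = ‖u - z • v‖ + (1 - ‖z‖) * ‖v‖ := by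
        rw [norm_smul, hzc, norm_mul, hc, norm_real, Real.norm_eq_abs, abs_of_nonpos (by linarith)]
        ring
  have hfar : ‖u‖ - ‖z‖ * ‖v‖ ≤ ‖u - z • v‖ := by
    simpa only [norm_smul] using norm_sub_norm_le u (z • v)
  nlinarith [h c hc, norm_nonneg v]

theorem ProjSeparated.max_mul_half_le_norm_smul_add_smul {m : ℝ} {u v : X}
    (h : ProjSeparated m u v) (huv : ‖u‖ = ‖v‖) (α β : ℂ) :
    max ‖α‖ ‖β‖ * (m / 2) ≤ ‖α • u + β • v‖ := by
  wlog hβα : ‖β‖ ≤ ‖α‖ generalizing u v α β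
  · rw [max_comm, add_comm]
    exact this h.symm huv.symm β α (le_of_not_ge hβα)
  rw [max_eq_left hβα]
  rcases eq_or_ne α 0 with rfl | hα
  · simp
  have hz : ‖-β / α‖ ≤ 1 := by
    rw [norm_div, norm_neg]
    exact div_le_one_of_le₀ hβα (norm_nonneg α)
  calc ‖α‖ * (m / 2) ≤ ‖α‖ * ‖u - (-β / α) • v‖ :=
        mul_le_mul_of_nonneg_left (h.half_le_norm_sub_smul huv.ge hz) (norm_nonneg α)
    _ = ‖α • u + β • v‖ := by
        rw [← norm_smul, smul_sub, smul_smul, mul_div_cancel₀ _ hα, neg_smul, sub_neg_eq_add]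

end

/-- If `u, v` are norm-one vectors in a complex normed space that are `m`-separated
in the projective sense (`‖u - λv‖ ≥ m` for all unimodular `λ`), then with
`δ = (1 + (1 + m/2)²)^{-1/2}` one has `‖αu + βv‖ ≥ δm/2` whenever `|α|² + |β|² = 1`. -/
theorem norm_smul_add_smul_ge
    (X : Type*) [NormedAddCommGroup X] [NormedSpace ℂ X]
    (u v : X) (hu : ‖u‖ = 1) (hv : ‖v‖ = 1) (m : ℝ) (hm : 0 < m)
    (hsep : ∀ c : ℂ, ‖c‖ = 1 → m ≤ ‖u - c • v‖)
    (α β : ℂ) (hαβ : ‖α‖ ^ 2 + ‖β‖ ^ 2 = 1) :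
    (Real.sqrt (1 + (1 + m / 2) ^ 2))⁻¹ * m / 2 ≤ ‖α • u + β • v‖ := by
  set δ := (Real.sqrt (1 + (1 + m / 2) ^ 2))⁻¹
  have hmax : 1 / 2 ≤ max ‖α‖ ‖β‖ ^ 2 := by
    have := pow_le_pow_left₀ (norm_nonneg α) (le_max_left ‖α‖ ‖β‖) 2
    have := pow_le_pow_left₀ (norm_nonneg β) (le_max_right ‖α‖ ‖β‖) 2
    linarith
  have hδ : δ ≤ max ‖α‖ ‖β‖ := by
    rw [← sq_le_sq₀ (by positivity) (le_max_of_le_left (norm_nonneg α)), inv_pow,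
      Real.sq_sqrt (by positivity)]
    calc (1 + (1 + m / 2) ^ 2)⁻¹ ≤ 2⁻¹ := inv_anti₀ two_pos (by nlinarith)
      _ ≤ max ‖α‖ ‖β‖ ^ 2 := by linarith
  calc δ * m / 2 = δ * (m / 2) := mul_div_assoc _ _ _
    _ ≤ max ‖α‖ ‖β‖ * (m / 2) := by gcongr
    _ ≤ ‖α • u + β • v‖ :=
        ProjSeparated.max_mul_half_le_norm_smul_add_smul hsep (hu.trans hv.symm) α β
end

section
/- Let u = (1,1,1,0) and w = (1,i,0,1) in ℂ⁴ and let E = span_ℂ{u, w}. Then E does phase retrieval in ℓ∞⁴(ℂ): for all f, g ∈ E with |f_j| = |g_j| for every j ∈ {1,2,3,4}, there exists λ ∈ ℂ with |λ| = 1 and f = λ·g. -/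
/-!
Writing `f = a u + b w`, the coordinates of `f` are `a + b`, `a + i b`, `a`, `b`. By polarization
their moduli determine `|a|`, `|b|` and `a b̄`, and two pairs `(a, b)`, `(c, d)` with the same
moduli and `a b̄ = c d̄` differ by a unimodular factor.
-/

open ComplexConjugate

theorem exists_norm_eq_one_of_mul_conj_eq {𝕜 : Type*} [RCLike 𝕜] {a b c d : 𝕜}
    (ha : ‖a‖ = ‖c‖) (hb : ‖b‖ = ‖d‖) (habcd : a * conj b = c * conj d) :
    ∃ t : 𝕜, ‖t‖ = 1 ∧ a = t * c ∧ b = t * d := by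
  have norm_div_eq_one {x y : 𝕜} (hxy : ‖x‖ = ‖y‖) (hy : y ≠ 0) : ‖x / y‖ = 1 := by
    rw [norm_div, hxy, div_self (norm_ne_zero_iff.mpr hy)]
  rcases eq_or_ne c 0 with rfl | hc
  · obtain rfl : a = 0 := norm_eq_zero.mp (ha.trans norm_zero)
    rcases eq_or_ne d 0 with rfl | hd
    · exact ⟨1, norm_one, by simp, by simpa using hb⟩
    · exact ⟨b / d, norm_div_eq_one hb hd, by simp, (div_mul_cancel₀ b hd).symm⟩
  · refine ⟨a / c, norm_div_eq_one ha hc, (div_mul_cancel₀ a hc).symm, ?_⟩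
    have ha0 : conj a ≠ 0 := by
      simpa [← norm_ne_zero_iff (a := a), ha] using hc
    have hnorm : conj a * a = conj c * c := by
      rw [RCLike.conj_mul, RCLike.conj_mul, ha]
    have hconj : conj a * b = conj c * d := by
      simpa [mul_comm] using congrArg conj habcd
    -- `(b c - a d) ā = c (ā b) - d (ā a) = c (c̄ d) - d (c̄ c) = 0`
    have key : (b * c - a * d) * conj a = 0 := by
      linear_combination c * hconj - d * hnorm
    have hbc : b * c = a * d := sub_eq_zero.mp ((mul_eq_zero.mp key).resolve_right ha0)
    field_simp
    linear_combination hbc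

theorem Complex.mul_conj_eq_of_norm_eq {a b c d : ℂ} (ha : ‖a‖ = ‖c‖) (hb : ‖b‖ = ‖d‖)
    (hre : ‖a + b‖ = ‖c + d‖) (him : ‖a + b * I‖ = ‖c + d * I‖) :
    a * conj b = c * conj d := by
  have normSq_eq {x y : ℂ} (hxy : ‖x‖ = ‖y‖) : normSq x = normSq y := by
    simp only [normSq_eq_norm_sq, hxy]
  have hre' := normSq_eq hre
  have him' := normSq_eq him
  simp only [normSq_add, map_mul, conj_I, normSq_I, mul_one, normSq_eq ha, normSq_eq hb,
    add_right_inj, mul_neg, ← mul_assoc, neg_re, mul_I_re, neg_neg] at hre' him'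
  apply Complex.ext <;> linarith

/-- The span of `u = (1,1,1,0)` and `w = (1,i,0,1)` in `ℂ⁴` does phase retrieval. -/
theorem span_does_phase_retrieval
    (f g : Fin 4 → ℂ)
    (hf : f ∈ Submodule.span ℂ ({![1, 1, 1, 0], ![1, Complex.I, 0, 1]} : Set (Fin 4 → ℂ)))
    (hg : g ∈ Submodule.span ℂ ({![1, 1, 1, 0], ![1, Complex.I, 0, 1]} : Set (Fin 4 → ℂ)))
    (h : ∀ j, ‖f j‖ = ‖g j‖) :
    ∃ c : ℂ, ‖c‖ = 1 ∧ f = c • g := by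
  obtain ⟨a, b, rfl⟩ := Submodule.mem_span_pair.mp hf
  obtain ⟨c, d, rfl⟩ := Submodule.mem_span_pair.mp hg
  have h0 : ‖a + b‖ = ‖c + d‖ := by simpa using h 0
  have h1 : ‖a + b * Complex.I‖ = ‖c + d * Complex.I‖ := by simpa using h 1
  have h2 : ‖a‖ = ‖c‖ := by simpa using h 2
  have h3 : ‖b‖ = ‖d‖ := by simpa using h 3
  obtain ⟨t, ht, rfl, rfl⟩ := exists_norm_eq_one_of_mul_conj_eq h2 h3
    (Complex.mul_conj_eq_of_norm_eq h2 h3 h0 h1)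
  exact ⟨t, ht, by rw [smul_add, smul_smul, smul_smul]⟩
end

section
/- Let K be a compact Hausdorff topological space and let E be a complex linear subspace of C(K; ℂ). If E contains two real-valued functions f, g (i.e., f(t), g(t) ∈ ℝ for all t ∈ K) that are linearly independent over ℝ, then E fails phase retrieval: the functions f + ig and f − ig belong to E, satisfy |f + ig| = |f − ig| pointwise, and f + ig ≠ λ(f − ig) for every λ ∈ ℂ with |λ| = 1. -/
/-!
Pointwise, `f - ig` is the complex conjugate of `f + ig`, so the moduli agree. A relation
`f + ig = c (f - ig)` is the `ℂ`-linear relation `(1 - c) f + i (1 + c) g = 0`; since `f, g`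
are real-valued, its real and imaginary parts are `ℝ`-linear relations, so `f, g` are
independent over `ℂ` as well and `1 - c = 0 = 1 + c`, which is absurd.
-/

open Complex

theorem Complex.norm_add_I_mul_eq_norm_sub_I_mul {x y : ℂ} (hx : x.im = 0) (hy : y.im = 0) :
    ‖x + I * y‖ = ‖x - I * y‖ := by
  rw [← norm_conj (x + I * y)]
  congr 1
  simp [Complex.ext_iff, hx, hy]

namespace ContinuousMap

variable {X : Type*} [TopologicalSpace X] {f g : C(X, ℂ)}

theorem re_smul_add_re_smul_eq_zero (hfr : ∀ t, (f t).im = 0) (hgr : ∀ t, (g t).im = 0)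
    {a b : ℂ} (h : a • f + b • g = 0) : a.re • f + b.re • g = 0 := by
  ext t : 1
  apply Complex.ext
  · simpa [mul_re, hfr t, hgr t] using congrArg re (DFunLike.congr_fun h t)
  · simp [hfr t, hgr t]

theorem linearIndependent_complex_of_im_eq_zero (hfr : ∀ t, (f t).im = 0)
    (hgr : ∀ t, (g t).im = 0) (hind : LinearIndependent ℝ ![f, g]) :
    LinearIndependent ℂ ![f, g] := by
  rw [LinearIndependent.pair_iff] at hind ⊢
  intro a b h
  have hre := hind _ _ (re_smul_add_re_smul_eq_zero hfr hgr h)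
  -- the imaginary parts of `a, b` are the real parts of `-I * a, -I * b`
  have hrot : (-I * a) • f + (-I * b) • g = 0 := by
    linear_combination (norm := module) -I • h
  have him := hind _ _ (re_smul_add_re_smul_eq_zero hfr hgr hrot)
  simp only [neg_mul, neg_re, mul_re, I_re, zero_mul, I_im, one_mul, zero_sub, neg_neg] at him
  exact ⟨Complex.ext hre.1 him.1, Complex.ext hre.2 him.2⟩

end ContinuousMap

theorem real_pair_fails_complex_phase_retrieval_general
    (K : Type*) [TopologicalSpace K]
    (E : Submodule ℂ C(K, ℂ)) (f g : C(K, ℂ)) (hf : f ∈ E) (hg : g ∈ E)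
    (hfr : ∀ t, (f t).im = 0) (hgr : ∀ t, (g t).im = 0)
    (hind : LinearIndependent ℝ ![f, g]) :
    f + Complex.I • g ∈ E ∧ f - Complex.I • g ∈ E ∧
    (∀ t, ‖(f + Complex.I • g) t‖ = ‖(f - Complex.I • g) t‖) ∧
    ∀ c : ℂ, ‖c‖ = 1 → f + Complex.I • g ≠ c • (f - Complex.I • g) := by
  refine ⟨E.add_mem hf (E.smul_mem _ hg), E.sub_mem hf (E.smul_mem _ hg),
    fun t => norm_add_I_mul_eq_norm_sub_I_mul (hfr t) (hgr t), fun c _ h => ?_⟩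
  have hcomb : (1 - c) • f + (I * (1 + c)) • g = 0 := by
    linear_combination (norm := module) h
  obtain ⟨hc₁, hc₂⟩ := LinearIndependent.pair_iff.1
    (ContinuousMap.linearIndependent_complex_of_im_eq_zero hfr hgr hind) _ _ hcomb
  have hc₂' : 1 + c = 0 := (mul_eq_zero.1 hc₂).resolve_left I_ne_zero
  have : (2 : ℂ) = 0 := by linear_combination hc₁ + hc₂'
  norm_num at this

/-- If a complex subspace `E` of `C(K; ℂ)` contains two real-valued functions `f, g`
that are linearly independent over `ℝ`, then `E` fails phase retrieval: `f + ig` and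
`f - ig` belong to `E`, have equal pointwise moduli, and are not unimodular
multiples of each other. -/
theorem real_pair_fails_complex_phase_retrieval
    (K : Type*) [TopologicalSpace K] [CompactSpace K] [T2Space K]
    (E : Submodule ℂ C(K, ℂ)) (f g : C(K, ℂ)) (hf : f ∈ E) (hg : g ∈ E)
    (hfr : ∀ t, (f t).im = 0) (hgr : ∀ t, (g t).im = 0)
    (hind : LinearIndependent ℝ ![f, g]) :
    f + Complex.I • g ∈ E ∧ f - Complex.I • g ∈ E ∧
    (∀ t, ‖(f + Complex.I • g) t‖ = ‖(f - Complex.I • g) t‖) ∧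
    ∀ c : ℂ, ‖c‖ = 1 → f + Complex.I • g ≠ c • (f - Complex.I • g) :=
  real_pair_fails_complex_phase_retrieval_general K E f g hf hg hfr hgr hind
end
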